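/- arXiv:1907.08912 — 5 statements merged into one kernel-verified Lean document; each statement's English description precedes it below -/
import Mathlib

section
/- The dual function d is (‖A‖²/α)-smooth: for all σ, τ ∈ EuclideanSpace ℝ κ, 0 ≤ d(σ) − d(τ) − ⟪A y_τ − b, σ − τ⟫ + (‖A‖²/(2α))·‖σ − τ‖², where y_τ is the unique minimizer of L(·,τ) over Y. -/
/-!
Writing `y_τ` for the minimizer of `L(·, τ)`, we have
`d σ - d τ - ⟪A y_τ - b, σ - τ⟫ = (L(y_σ, τ) - L(y_τ, τ)) + ⟪σ - τ, A (y_σ - y_τ)⟫`.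
Strong convexity of `L(·, τ)` gives quadratic growth `α/2 ‖y_σ - y_τ‖²` at its minimizer, the
second term is at least `-‖A‖ ‖σ - τ‖ ‖y_σ - y_τ‖`, and minimizing the resulting quadratic in
`‖y_σ - y_τ‖` yields `-‖A‖² / (2α) ‖σ - τ‖²`.
-/

open scoped RealInnerProductSpace

open Set

lemma StrongConvexOn.add_convexOn {E : Type*} [NormedAddCommGroup E] [NormedSpace ℝ E]
    {s : Set E} {m : ℝ} {f g : E → ℝ} (hf : StrongConvexOn s m f) (hg : ConvexOn ℝ s g) :
    StrongConvexOn s m (f + g) := by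
  have h := hf.add (uniformConvexOn_zero.2 hg)
  rwa [add_zero] at h

lemma StrongConvexOn.add_mul_sq_le_of_isMinOn {E : Type*} [NormedAddCommGroup E]
    [NormedSpace ℝ E] {s : Set E} {m : ℝ} {f : E → ℝ} {x y : E} (hf : StrongConvexOn s m f)
    (hmin : IsMinOn f s x) (hx : x ∈ s) (hy : y ∈ s) :
    f x + m / 2 * ‖y - x‖ ^ 2 ≤ f y := by
  have hsegment : ∀ t ∈ Ioo (0 : ℝ) 1, (1 - t) * (m / 2 * ‖y - x‖ ^ 2) ≤ f y - f x := by
    rintro t ⟨ht₀, ht₁⟩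
    have hconv := hf.2 hy hx ht₀.le (sub_nonneg.2 ht₁.le) (add_sub_cancel t 1)
    have hmem := hf.1 hy hx ht₀.le (sub_nonneg.2 ht₁.le) (add_sub_cancel t 1)
    have hle := isMinOn_iff.1 hmin _ hmem
    simp only [smul_eq_mul] at hconv
    have : t * ((1 - t) * (m / 2 * ‖y - x‖ ^ 2)) ≤ t * (f y - f x) := by linarith
    exact le_of_mul_le_mul_left this ht₀
  -- let `t → 0⁺`
  have hclosed : IsClosed {t : ℝ | (1 - t) * (m / 2 * ‖y - x‖ ^ 2) ≤ f y - f x} :=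
    isClosed_le (by fun_prop) continuous_const
  have hzero : (0 : ℝ) ∈ closure (Ioo 0 1) := by simp [closure_Ioo zero_ne_one]
  have := hclosed.closure_subset_iff.2 hsegment hzero
  simp only [mem_ofPred_eq, sub_zero, one_mul] at this
  linarith

lemma mul_le_half_mul_sq_add_sq_div {α : ℝ} (hα : 0 < α) (a t : ℝ) :
    a * t ≤ α / 2 * t ^ 2 + a ^ 2 / (2 * α) := by
  have hsq : α / 2 * t ^ 2 + a ^ 2 / (2 * α) - a * t = (α * t - a) ^ 2 / (2 * α) := by
    field_simp
    ring
  have : 0 ≤ (α * t - a) ^ 2 / (2 * α) := by positivity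
  linarith

section Lagrangian

variable {E F : Type*} [NormedAddCommGroup E] [InnerProductSpace ℝ E]
  [NormedAddCommGroup F] [InnerProductSpace ℝ F]

def lagrangian (f : E → ℝ) (A : E →L[ℝ] F) (b : F) (y : E) (τ : F) : ℝ :=
  f y + ⟪τ, A y - b⟫

variable {f : E → ℝ} {A : E →L[ℝ] F} {b : F}

lemma lagrangian_eq_add_inner (y : E) (σ τ : F) :
    lagrangian f A b y σ = lagrangian f A b y τ + ⟪σ - τ, A y - b⟫ := by
  simp only [lagrangian, inner_sub_left]
  ring

lemma StrongConvexOn.lagrangian {Y : Set E} {α : ℝ} (hf : StrongConvexOn Y α f) (τ : F) :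
    StrongConvexOn Y α (lagrangian f A b · τ) := by
  have hlin : ConvexOn ℝ Y fun y ↦ ⟪τ, A y - b⟫ := by
    refine ⟨hf.1, fun x _ y _ a c _ _ hac ↦ le_of_eq ?_⟩
    simp only [smul_eq_mul, map_add, map_smul, inner_sub_right, inner_add_right,
      real_inner_smul_right]
    linear_combination ⟪τ, b⟫ * hac
  exact hf.add_convexOn hlin

lemma neg_mul_le_inner_map (A : E →L[ℝ] F) (v : F) (w : E) :
    -(‖A‖ * ‖v‖ * ‖w‖) ≤ ⟪v, A w⟫ := by
  have hcs := neg_abs_le ⟪v, A w⟫ |>.trans' (neg_le_neg (abs_real_inner_le_norm v (A w)))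
  have hop : ‖v‖ * ‖A w‖ ≤ ‖v‖ * (‖A‖ * ‖w‖) := by gcongr; exact A.le_opNorm w
  linarith

theorem lagrangian_lower_bound_of_isMinOn {Y : Set E} {α : ℝ} (hα : 0 < α)
    (hf : StrongConvexOn Y α f) {y z : E} {σ τ : F} (hy : y ∈ Y)
    (hmin : IsMinOn (lagrangian f A b · τ) Y y) (hz : z ∈ Y) :
    lagrangian f A b y τ + ⟪A y - b, σ - τ⟫ - ‖A‖ ^ 2 / (2 * α) * ‖σ - τ‖ ^ 2 ≤
      lagrangian f A b z σ := by
  have hgrowth := (hf.lagrangian τ).add_mul_sq_le_of_isMinOn hmin hy hz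
  have hcross := neg_mul_le_inner_map A (σ - τ) (z - y)
  have hyoung := mul_le_half_mul_sq_add_sq_div hα (‖A‖ * ‖σ - τ‖) ‖z - y‖
  have hsplit : ⟪σ - τ, A z - b⟫ = ⟪A y - b, σ - τ⟫ + ⟪σ - τ, A (z - y)⟫ := by
    rw [real_inner_comm (σ - τ) (A y - b), ← inner_add_right, map_sub]
    congr 1
    abel
  have hreassoc : (‖A‖ * ‖σ - τ‖) ^ 2 / (2 * α) = ‖A‖ ^ 2 / (2 * α) * ‖σ - τ‖ ^ 2 := by ring
  rw [lagrangian_eq_add_inner z σ τ, hsplit]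
  linarith

end Lagrangian

theorem stmt_1_general
    {ι κ : Type*} [Fintype ι] [Fintype κ]
    (Y : Set (EuclideanSpace ℝ ι))
    (α : ℝ) (hα : 0 < α)
    (F₀ : EuclideanSpace ℝ ι → ℝ)
    (hF₀sc : StrongConvexOn Y α F₀)
    (A : EuclideanSpace ℝ ι →L[ℝ] EuclideanSpace ℝ κ) (b : EuclideanSpace ℝ κ)
    (L : EuclideanSpace ℝ ι → EuclideanSpace ℝ κ → ℝ)
    (hL : ∀ y τ, L y τ = F₀ y + ⟪τ, A y - b⟫)
    (d : EuclideanSpace ℝ κ → ℝ)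
    (hd : ∀ τ, d τ = sInf ((fun y => L y τ) '' Y))
    (yt : EuclideanSpace ℝ κ → EuclideanSpace ℝ ι)
    (hytY : ∀ τ, yt τ ∈ Y)
    (hytmin : ∀ τ, ∀ y ∈ Y, L (yt τ) τ ≤ L y τ)
    :
    ∀ σ τ : EuclideanSpace ℝ κ,
      0 ≤ d σ - d τ - ⟪A (yt τ) - b, σ - τ⟫ + ‖A‖ ^ 2 / (2 * α) * ‖σ - τ‖ ^ 2 := by
  intro σ τ
  obtain rfl : L = lagrangian F₀ A b := by
    funext y τ
    exact hL y τ
  have hd_eq : ∀ ρ, d ρ = lagrangian F₀ A b (yt ρ) ρ := fun ρ ↦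
    (hd ρ).trans (IsLeast.csInf_eq ⟨mem_image_of_mem _ (hytY ρ), forall_mem_image.2 (hytmin ρ)⟩)
  have := lagrangian_lower_bound_of_isMinOn (σ := σ) hα hF₀sc (hytY τ)
    (isMinOn_iff.2 (hytmin τ)) (hytY σ)
  rw [hd_eq, hd_eq]
  linarith

theorem stmt_1
    {ι κ : Type*} [Fintype ι] [Fintype κ] [Nonempty ι] [Nonempty κ]
    (Y : Set (EuclideanSpace ℝ ι)) (hYne : Y.Nonempty) (hYcpt : IsCompact Y)
    (hYconv : Convex ℝ Y)
    (α : ℝ) (hα : 0 < α)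
    (F₀ : EuclideanSpace ℝ ι → ℝ) (hF₀cont : Continuous F₀)
    (hF₀sc : StrongConvexOn Y α F₀)
    (A : EuclideanSpace ℝ ι →L[ℝ] EuclideanSpace ℝ κ) (b : EuclideanSpace ℝ κ)
    (L : EuclideanSpace ℝ ι → EuclideanSpace ℝ κ → ℝ)
    (hL : ∀ y τ, L y τ = F₀ y + ⟪τ, A y - b⟫)
    (d : EuclideanSpace ℝ κ → ℝ)
    (hd : ∀ τ, d τ = sInf ((fun y => L y τ) '' Y))
    (yt : EuclideanSpace ℝ κ → EuclideanSpace ℝ ι)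
    (hytY : ∀ τ, yt τ ∈ Y)
    (hytmin : ∀ τ, ∀ y ∈ Y, L (yt τ) τ ≤ L y τ)
    :
    ∀ σ τ : EuclideanSpace ℝ κ,
      0 ≤ d σ - d τ - ⟪A (yt τ) - b, σ - τ⟫ + ‖A‖ ^ 2 / (2 * α) * ‖σ - τ‖ ^ 2 :=
  stmt_1_general Y α hα F₀ hF₀sc A b L hL d hd yt hytY hytmin
end

section
/- For every τ ∈ EuclideanSpace ℝ κ, the dual function d is differentiable at τ with gradient A y_τ − b, where y_τ is the unique minimizer of L(·,τ) over Y; i.e., HasGradientAt d (A y_τ − b) τ. -/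
/-!
Comparing each tilted potential at the other's minimizer sandwiches the increment of `d`:
`⟪σ - τ, A y_σ - b⟫ ≤ d σ - d τ ≤ ⟪σ - τ, A y_τ - b⟫`, so `d` has gradient `A y_τ - b` as soon as
`σ ↦ A y_σ` is continuous (Danskin). Continuity comes from strong convexity: the tilted potential
grows quadratically away from its minimizer, which makes `σ ↦ y_σ` Lipschitz with constant
`4 ‖A‖ / α`.
-/

open scoped RealInnerProductSpace

section
variable {E F : Type*} [NormedAddCommGroup E] [NormedSpace ℝ E]
  [NormedAddCommGroup F] [InnerProductSpace ℝ F] {s : Set E} {m : ℝ} {f : E → ℝ}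

lemma StrongConvexOn.mul_sq_norm_sub_le_of_isMinOn {x y : E} (hf : StrongConvexOn s m f)
    (hx : x ∈ s) (hmin : IsMinOn f s x) (hy : y ∈ s) :
    m / 4 * ‖y - x‖ ^ 2 ≤ f y - f x := by
  -- Only the midpoint inequality is used, hence `m / 4` instead of the sharp `m / 2`.
  have hhalf : (0 : ℝ) ≤ 1 / 2 := by norm_num
  have hsum : (1 / 2 : ℝ) + 1 / 2 = 1 := by norm_num
  have hmid := hf.2 hx hy hhalf hhalf hsum
  have hle : f x ≤ f ((1 / 2 : ℝ) • x + (1 / 2 : ℝ) • y) := hmin (hf.1 hx hy hhalf hhalf hsum)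
  rw [norm_sub_rev]
  simp only [smul_eq_mul] at hmid
  linarith

lemma StrongConvexOn.add_inner_map_sub (hf : StrongConvexOn s m f) (A : E →L[ℝ] F) (b σ : F) :
    StrongConvexOn s m (fun y => f y + ⟪σ, A y - b⟫) := by
  have htilt : ConvexOn ℝ s (fun y => ⟪σ, A y - b⟫) := by
    have hsplit : (fun y => ⟪σ, A y - b⟫) =
        ⇑((innerSL ℝ σ).comp A).toLinearMap + fun _ => -⟪σ, b⟫ := by
      ext y
      simp [inner_sub_right, ← sub_eq_add_neg]
    rw [hsplit]
    exact (LinearMap.convexOn _ hf.1).add_const _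
  have := hf.add (uniformConvexOn_zero.2 htilt)
  rwa [add_zero] at this

lemma StrongConvexOn.norm_sub_le_of_isMinOn_add_inner (hf : StrongConvexOn s m f) (hm : 0 < m)
    (A : E →L[ℝ] F) (b : F) {σ τ : F} {u v : E} (hu : u ∈ s) (hv : v ∈ s)
    (hσ : IsMinOn (fun y => f y + ⟪σ, A y - b⟫) s u)
    (hτ : IsMinOn (fun y => f y + ⟪τ, A y - b⟫) s v) :
    ‖u - v‖ ≤ 4 * ‖A‖ / m * ‖σ - τ‖ := by
  have hgrowth := (hf.add_inner_map_sub A b σ).mul_sq_norm_sub_le_of_isMinOn hu hσ hv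
  have hτv : f v + ⟪τ, A v - b⟫ ≤ f u + ⟪τ, A u - b⟫ := hτ hu
  have hcross : ⟪σ - τ, A v - A u⟫ ≤ ‖A‖ * ‖σ - τ‖ * ‖u - v‖ := calc
    ⟪σ - τ, A v - A u⟫ ≤ ‖σ - τ‖ * ‖A (v - u)‖ := by
      rw [map_sub]; exact real_inner_le_norm _ _
    _ ≤ ‖σ - τ‖ * (‖A‖ * ‖v - u‖) := by gcongr; exact A.le_opNorm _
    _ = ‖A‖ * ‖σ - τ‖ * ‖u - v‖ := by rw [norm_sub_rev v]; ring
  have hsq : m / 4 * ‖u - v‖ ^ 2 ≤ ‖A‖ * ‖σ - τ‖ * ‖u - v‖ := by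
    simp only [inner_sub_left, inner_sub_right] at hgrowth hτv hcross
    rw [norm_sub_rev] at hgrowth
    linarith
  rcases (norm_nonneg (u - v)).eq_or_lt with h0 | hpos
  · rw [← h0]; positivity
  · rw [div_mul_eq_mul_div, le_div_iff₀ hm]
    nlinarith
end

lemma hasGradientAt_of_isMinOn_add_inner {X F : Type*} [NormedAddCommGroup F]
    [InnerProductSpace ℝ F] [CompleteSpace F] {Y : Set X} {f : X → ℝ} {g : X → F}
    {y : F → X} {τ : F} (hyY : ∀ σ, y σ ∈ Y)
    (hmin : ∀ σ, IsMinOn (fun x => f x + ⟪σ, g x⟫) Y (y σ))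
    (hcont : ContinuousAt (g ∘ y) τ) :
    HasGradientAt (fun σ => f (y σ) + ⟪σ, g (y σ)⟫) (g (y τ)) τ := by
  rw [hasGradientAt_iff_isLittleO, Asymptotics.isLittleO_iff]
  intro c hc
  filter_upwards [hcont (Metric.closedBall_mem_nhds _ hc)] with σ hσ
  have hσ' : ‖g (y σ) - g (y τ)‖ ≤ c := by simpa [dist_eq_norm] using hσ
  -- Evaluating each tilted objective at the other minimizer sandwiches the remainder.
  have hup : f (y σ) + ⟪σ, g (y σ)⟫ ≤ f (y τ) + ⟪σ, g (y τ)⟫ := hmin σ (hyY τ)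
  have hlow : f (y τ) + ⟪τ, g (y τ)⟫ ≤ f (y σ) + ⟪τ, g (y σ)⟫ := hmin τ (hyY σ)
  have hcross : |⟪σ - τ, g (y σ) - g (y τ)⟫| ≤ c * ‖σ - τ‖ := calc
    _ ≤ ‖σ - τ‖ * ‖g (y σ) - g (y τ)‖ := abs_real_inner_le_norm _ _
    _ ≤ c * ‖σ - τ‖ := by rw [mul_comm]; gcongr
  rw [← real_inner_comm (g (y τ))]
  simp only [inner_sub_left, inner_sub_right] at hcross ⊢
  rw [abs_le] at hcross
  rw [Real.norm_eq_abs, abs_le]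
  constructor <;> linarith [hcross.1, hcross.2]

theorem stmt_2_general
    {ι κ : Type*} [Fintype ι] [Fintype κ]
    (Y : Set (EuclideanSpace ℝ ι))
    (α : ℝ) (hα : 0 < α)
    (F₀ : EuclideanSpace ℝ ι → ℝ)
    (hF₀sc : StrongConvexOn Y α F₀)
    (A : EuclideanSpace ℝ ι →L[ℝ] EuclideanSpace ℝ κ) (b : EuclideanSpace ℝ κ)
    (L : EuclideanSpace ℝ ι → EuclideanSpace ℝ κ → ℝ)
    (hL : ∀ y τ, L y τ = F₀ y + ⟪τ, A y - b⟫)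
    (d : EuclideanSpace ℝ κ → ℝ)
    (hd : ∀ τ, d τ = sInf ((fun y => L y τ) '' Y))
    (yt : EuclideanSpace ℝ κ → EuclideanSpace ℝ ι)
    (hytY : ∀ τ, yt τ ∈ Y)
    (hytmin : ∀ τ, ∀ y ∈ Y, L (yt τ) τ ≤ L y τ)
    :
    ∀ τ : EuclideanSpace ℝ κ, HasGradientAt d (A (yt τ) - b) τ := by
  intro τ
  have hmin (σ) : IsMinOn (fun y => F₀ y + ⟪σ, A y - b⟫) Y (yt σ) :=
    isMinOn_iff.2 fun y hy => by simpa only [hL] using hytmin σ y hy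
  have hdL : d = fun σ => F₀ (yt σ) + ⟪σ, A (yt σ) - b⟫ := by
    ext σ
    rw [hd, ← hL]
    exact IsLeast.csInf_eq ⟨⟨_, hytY σ, rfl⟩, Set.forall_mem_image.2 (hytmin σ)⟩
  have hcont : ContinuousAt ((fun y => A y - b) ∘ yt) τ :=
    (A.continuous.sub continuous_const).continuousAt.comp <|
      continuousAt_of_locally_lipschitz one_pos (4 * ‖A‖ / α) fun σ _ => by
        simpa only [dist_eq_norm] using
          hF₀sc.norm_sub_le_of_isMinOn_add_inner hα A b (hytY σ) (hytY τ) (hmin σ) (hmin τ)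
  rw [hdL]
  exact hasGradientAt_of_isMinOn_add_inner hytY hmin hcont

theorem stmt_2
    {ι κ : Type*} [Fintype ι] [Fintype κ] [Nonempty ι] [Nonempty κ]
    (Y : Set (EuclideanSpace ℝ ι)) (hYne : Y.Nonempty) (hYcpt : IsCompact Y)
    (hYconv : Convex ℝ Y)
    (α : ℝ) (hα : 0 < α)
    (F₀ : EuclideanSpace ℝ ι → ℝ) (hF₀cont : Continuous F₀)
    (hF₀sc : StrongConvexOn Y α F₀)
    (A : EuclideanSpace ℝ ι →L[ℝ] EuclideanSpace ℝ κ) (b : EuclideanSpace ℝ κ)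
    (L : EuclideanSpace ℝ ι → EuclideanSpace ℝ κ → ℝ)
    (hL : ∀ y τ, L y τ = F₀ y + ⟪τ, A y - b⟫)
    (d : EuclideanSpace ℝ κ → ℝ)
    (hd : ∀ τ, d τ = sInf ((fun y => L y τ) '' Y))
    (yt : EuclideanSpace ℝ κ → EuclideanSpace ℝ ι)
    (hytY : ∀ τ, yt τ ∈ Y)
    (hytmin : ∀ τ, ∀ y ∈ Y, L (yt τ) τ ≤ L y τ)
    :
    ∀ τ : EuclideanSpace ℝ κ, HasGradientAt d (A (yt τ) - b) τ :=
  stmt_2_general Y α hα F₀ hF₀sc A b L hL d hd yt hytY hytmin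
end

section
/- (Accumulated constraint violation is dominated by the toll.) For every k ≥ 1, the average response ȳ^k = (1/k)∑_{s=0}^{k-1} y^s satisfies γ·k·[A ȳ^k − b]_+ ≤ τ^k componentwise, where [v]_+ denotes the componentwise positive part of v. -/
open scoped RealInnerProductSpace

/-!
The toll update is a Lindley recursion `t (s+1) = max (t s + g s) 0` in each coordinate, with
`g s = γ (A yˢ - b)ᵢ`. Dropping the positive part only decreases each step, so
`t k ≥ t 0 + ∑_{s<k} g s ≥ ∑_{s<k} g s`, and `t k ≥ 0`; hence `t k ≥ [∑_{s<k} g s]_+`.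
By linearity of `A`, `∑_{s<k} g s = γ k (A ȳᵏ - b)ᵢ`.
-/

open Finset

section Lindley

variable {t g : ℕ → ℝ}

lemma nonneg_of_eq_max_add_zero (ht : ∀ s, t (s + 1) = max (t s + g s) 0) (h0 : 0 ≤ t 0) :
    ∀ s, 0 ≤ t s
  | 0 => h0
  | s + 1 => ht s ▸ le_max_right _ _

lemma add_sum_le_of_eq_max_add_zero (ht : ∀ s, t (s + 1) = max (t s + g s) 0) (k : ℕ) :
    t 0 + ∑ s ∈ range k, g s ≤ t k := by
  induction k with
  | zero => simp
  | succ k ih =>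
    rw [sum_range_succ, ht k]
    exact le_max_of_le_left (by linarith)

lemma max_sum_zero_le_of_eq_max_add_zero (ht : ∀ s, t (s + 1) = max (t s + g s) 0)
    (h0 : 0 ≤ t 0) (k : ℕ) : max (∑ s ∈ range k, g s) 0 ≤ t k :=
  max_le (by linarith [add_sum_le_of_eq_max_add_zero ht k])
    (nonneg_of_eq_max_add_zero ht h0 k)

end Lindley

lemma mul_max_zero_le {R : Type*} [Ring R] [LinearOrder R] [IsStrictOrderedRing R] (c x : R) :
    c * max x 0 ≤ max (c * x) 0 := by
  rcases le_total 0 c with hc | hc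
  · rw [mul_max_of_nonneg _ _ hc, mul_zero]
  · exact le_max_of_le_right (mul_nonpos_of_nonpos_of_nonneg hc (le_max_right _ _))

lemma natCast_smul_sub_map_average {𝕜 E F : Type*} [DivisionRing 𝕜] [CharZero 𝕜]
    [AddCommGroup E] [Module 𝕜 E] [AddCommGroup F] [Module 𝕜 F] (A : E →ₗ[𝕜] F) (b : F)
    (y : ℕ → E) {k : ℕ} (hk : k ≠ 0) :
    (k : 𝕜) • (A ((k : 𝕜)⁻¹ • ∑ s ∈ range k, y s) - b) = ∑ s ∈ range k, (A (y s) - b) := by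
  have hk' : (k : 𝕜) ≠ 0 := Nat.cast_ne_zero.mpr hk
  rw [map_smul, smul_sub, smul_inv_smul₀ hk', sum_sub_distrib, map_sum, sum_const, card_range,
    Nat.cast_smul_eq_nsmul]

theorem stmt_10_general
    {ι κ : Type*}
    (A : EuclideanSpace ℝ ι →L[ℝ] EuclideanSpace ℝ κ) (b : EuclideanSpace ℝ κ)
    (L : EuclideanSpace ℝ ι → EuclideanSpace ℝ κ → ℝ)
    (γ : ℝ)
    (τs : ℕ → EuclideanSpace ℝ κ) (ys : ℕ → EuclideanSpace ℝ ι)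
    (hτ0 : ∀ i, 0 ≤ τs 0 i)
    (hupdate : ∀ s i, τs (s + 1) i = max (τs s i + γ * (A (ys s) - b) i) 0)
    :
    ∀ k : ℕ, 1 ≤ k → ∀ i : κ,
      γ * k * max ((A ((k : ℝ)⁻¹ • ∑ s ∈ Finset.range k, ys s) - b) i) 0 ≤ τs k i := by
  intro k hk i
  have hsum : γ * k * (A ((k : ℝ)⁻¹ • ∑ s ∈ range k, ys s) - b) i
      = ∑ s ∈ range k, γ * (A (ys s) - b) i := by
    have hvec : (k : ℝ) • (A ((k : ℝ)⁻¹ • ∑ s ∈ range k, ys s) - b)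
        = ∑ s ∈ range k, (A (ys s) - b) :=
      natCast_smul_sub_map_average A.toLinearMap b ys (by omega)
    rw [mul_assoc, ← smul_eq_mul (a := (k : ℝ)), ← PiLp.smul_apply, hvec, ← mul_sum]
    simp
  calc γ * k * max ((A ((k : ℝ)⁻¹ • ∑ s ∈ range k, ys s) - b) i) 0
      ≤ max (γ * k * (A ((k : ℝ)⁻¹ • ∑ s ∈ range k, ys s) - b) i) 0 := mul_max_zero_le _ _
    _ = max (∑ s ∈ range k, γ * (A (ys s) - b) i) 0 := by rw [hsum]
    _ ≤ τs k i :=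
      max_sum_zero_le_of_eq_max_add_zero (t := fun s => τs s i) (hupdate · i) (hτ0 i) k

theorem stmt_10
    {ι κ : Type*} [Fintype ι] [Fintype κ] [Nonempty ι] [Nonempty κ]
    (Y : Set (EuclideanSpace ℝ ι)) (hYne : Y.Nonempty) (hYcpt : IsCompact Y)
    (hYconv : Convex ℝ Y)
    (α : ℝ) (hα : 0 < α)
    (F₀ : EuclideanSpace ℝ ι → ℝ) (hF₀cont : Continuous F₀)
    (hF₀sc : StrongConvexOn Y α F₀)
    (A : EuclideanSpace ℝ ι →L[ℝ] EuclideanSpace ℝ κ) (b : EuclideanSpace ℝ κ)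
    (L : EuclideanSpace ℝ ι → EuclideanSpace ℝ κ → ℝ)
    (hL : ∀ y τ, L y τ = F₀ y + ⟪τ, A y - b⟫)
    (d : EuclideanSpace ℝ κ → ℝ)
    (hd : ∀ τ, d τ = sInf ((fun y => L y τ) '' Y))
    (γ : ℝ) (hγ : 0 < γ)
    (τs : ℕ → EuclideanSpace ℝ κ) (ys : ℕ → EuclideanSpace ℝ ι) (εs : ℕ → ℝ)
    (hτ0 : ∀ i, 0 ≤ τs 0 i)
    (hεs : ∀ s, 0 ≤ εs s)
    (hysY : ∀ s, ys s ∈ Y)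
    (hyseq : ∀ s, L (ys s) (τs s) ≤ d (τs s) + εs s)
    (hupdate : ∀ s i, τs (s + 1) i = max (τs s i + γ * (A (ys s) - b) i) 0)
    :
    ∀ k : ℕ, 1 ≤ k → ∀ i : κ,
      γ * k * max ((A ((k : ℝ)⁻¹ • ∑ s ∈ Finset.range k, ys s) - b) i) 0 ≤ τs k i :=
  stmt_10_general A b L γ τs ys hτ0 hupdate
end

section
/- (Strong convexity of the integrated congestion potential.) Suppose for each i ∈ ι, ℓ_i : ℝ → ℝ is monotone increasing and satisfies α·|x − x'| ≤ |ℓ_i(x) − ℓ_i(x')| for all x, x' ≥ 0. Define F₀ : EuclideanSpace ℝ ι → ℝ by F₀(y) = ∑_{i ∈ ι} ∫_0^{y_i} ℓ_i(u) du (intervalIntegral). Then F₀ is α-strongly convex on the nonnegative orthant {y : ∀ i, y_i ≥ 0}. -/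
open Set intervalIntegral

/-! Subtracting `α/2 ‖y‖²` from `F₀` leaves `∑ i, ∫₀^{y i} (ℓ i u - α u) du`. The growth bound makes
each `u ↦ ℓ i u - α u` monotone on `[0, ∞)`, and the primitive of a monotone function `g` is convex: its
slope over `[x, y]` is an average of `g`, hence at most `g y`, which is at most its slope over `[y, z]`. -/

namespace MonotoneOn

variable {g : ℝ → ℝ} {x y : ℝ}

lemma intervalIntegral_le_mul_sub (hxy : x ≤ y) (hg : MonotoneOn g (Icc x y)) :
    ∫ u in x..y, g u ≤ g y * (y - x) := by
  have hint : IntervalIntegrable g MeasureTheory.volume x y :=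
    (hg.mono (uIcc_of_le hxy).subset).intervalIntegrable
  calc ∫ u in x..y, g u ≤ ∫ _ in x..y, g y :=
        integral_mono_on hxy hint intervalIntegrable_const
          fun u hu ↦ hg hu (right_mem_Icc.2 hxy) hu.2
    _ = g y * (y - x) := by rw [integral_const, smul_eq_mul, mul_comm]

lemma mul_sub_le_intervalIntegral (hxy : x ≤ y) (hg : MonotoneOn g (Icc x y)) :
    g x * (y - x) ≤ ∫ u in x..y, g u := by
  have hint : IntervalIntegrable g MeasureTheory.volume x y :=
    (hg.mono (uIcc_of_le hxy).subset).intervalIntegrable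
  calc g x * (y - x) = ∫ _ in x..y, g x := by rw [integral_const, smul_eq_mul, mul_comm]
    _ ≤ ∫ u in x..y, g u :=
        integral_mono_on hxy intervalIntegrable_const hint
          fun u hu ↦ hg (left_mem_Icc.2 hxy) hu hu.1

lemma convexOn_intervalIntegral {s : Set ℝ} {a : ℝ} (hs : Convex ℝ s) (ha : a ∈ s)
    (hg : MonotoneOn g s) : ConvexOn ℝ s fun x ↦ ∫ u in a..x, g u := by
  have hint : ∀ p ∈ s, ∀ q ∈ s, IntervalIntegrable g MeasureTheory.volume p q :=
    fun p hp q hq ↦ (hg.mono (hs.ordConnected.uIcc_subset hp hq)).intervalIntegrable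
  refine convexOn_of_slope_mono_adjacent hs fun {x y z} hx hz hxy hyz ↦ ?_
  have hy : y ∈ s := hs.ordConnected.out hx hz ⟨hxy.le, hyz.le⟩
  rw [integral_interval_sub_left (hint a ha y hy) (hint a ha x hx),
    integral_interval_sub_left (hint a ha z hz) (hint a ha y hy),
    div_le_iff₀ (sub_pos.2 hxy), div_mul_eq_mul_div, le_div_iff₀ (sub_pos.2 hyz)]
  calc (∫ u in x..y, g u) * (z - y) ≤ g y * (y - x) * (z - y) :=
        mul_le_mul_of_nonneg_right
          (intervalIntegral_le_mul_sub hxy.le (hg.mono (hs.ordConnected.out hx hy)))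
          (sub_pos.2 hyz).le
    _ = g y * (z - y) * (y - x) := by ring
    _ ≤ (∫ u in y..z, g u) * (y - x) :=
        mul_le_mul_of_nonneg_right
          (mul_sub_le_intervalIntegral hyz.le (hg.mono (hs.ordConnected.out hy hz)))
          (sub_pos.2 hxy).le

end MonotoneOn

lemma MonotoneOn.sub_mul_of_le_abs_sub {ℓ : ℝ → ℝ} {s : Set ℝ} {α : ℝ} (hℓ : MonotoneOn ℓ s)
    (hgrowth : ∀ x x', x ∈ s → x' ∈ s → α * |x - x'| ≤ |ℓ x - ℓ x'|) :
    MonotoneOn (fun u ↦ ℓ u - α * u) s := by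
  intro u hu v hv huv
  have h := hgrowth v u hv hu
  rw [abs_of_nonneg (sub_nonneg.2 huv), abs_of_nonneg (sub_nonneg.2 (hℓ hu hv huv))] at h
  linarith

lemma EuclideanSpace.convexOn_sum_apply {ι : Type*} [Fintype ι] {s : Set ℝ} {φ : ι → ℝ → ℝ}
    (hs : Convex ℝ s) (hφ : ∀ i, ConvexOn ℝ s (φ i)) :
    ConvexOn ℝ {y : EuclideanSpace ℝ ι | ∀ i, y i ∈ s} fun y ↦ ∑ i, φ i (y i) := by
  refine ⟨fun x hx y hy a b ha hb hab i ↦ ?_, fun x hx y hy a b ha hb hab ↦ ?_⟩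
  · simpa using hs (hx i) (hy i) ha hb hab
  · simp only [PiLp.add_apply, PiLp.smul_apply, smul_eq_mul, Finset.mul_sum,
      ← Finset.sum_add_distrib]
    exact Finset.sum_le_sum fun i _ ↦ (hφ i).2 (hx i) (hy i) ha hb hab

lemma intervalIntegral_sub_mul_id {ℓ : ℝ → ℝ} {t : ℝ} (α : ℝ)
    (hℓ : IntervalIntegrable ℓ MeasureTheory.volume 0 t) :
    ∫ u in (0 : ℝ)..t, (ℓ u - α * u) = (∫ u in (0 : ℝ)..t, ℓ u) - α / 2 * t ^ 2 := by
  rw [integral_sub hℓ ((continuous_const_mul α).intervalIntegrable 0 t),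
    integral_const_mul, integral_id]
  ring

theorem stmt_16_general
    {ι : Type*} [Fintype ι]
    (α : ℝ)
    (ℓ : ι → ℝ → ℝ)
    (hmono : ∀ i, Monotone (ℓ i))
    (hgrowth : ∀ i, ∀ x x' : ℝ, 0 ≤ x → 0 ≤ x' → α * |x - x'| ≤ |ℓ i x - ℓ i x'|)
    (F₀ : EuclideanSpace ℝ ι → ℝ)
    (hF₀ : ∀ y, F₀ y = ∑ i, ∫ u in (0 : ℝ)..(y i), ℓ i u) :
    StrongConvexOn {y : EuclideanSpace ℝ ι | ∀ i, 0 ≤ y i} α F₀ := by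
  have hshift : (fun y ↦ F₀ y - α / 2 * ‖y‖ ^ 2) =
      fun y : EuclideanSpace ℝ ι ↦ ∑ i, ∫ u in (0 : ℝ)..(y i), (ℓ i u - α * u) := by
    ext y
    simp only [hF₀, EuclideanSpace.norm_sq_eq, Real.norm_eq_abs, sq_abs, Finset.mul_sum,
      ← Finset.sum_sub_distrib, intervalIntegral_sub_mul_id α (hmono _).intervalIntegrable]
  rw [strongConvexOn_iff_convex, hshift]
  exact EuclideanSpace.convexOn_sum_apply (convex_Ici 0) fun i ↦
    ((hmono i).monotoneOn _).sub_mul_of_le_abs_sub (hgrowth i)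
      |>.convexOn_intervalIntegral (convex_Ici 0) (mem_Ici.2 le_rfl)

theorem stmt_16
    {ι : Type*} [Fintype ι] [Nonempty ι]
    (α : ℝ) (hα : 0 < α)
    (ℓ : ι → ℝ → ℝ)
    (hmono : ∀ i, Monotone (ℓ i))
    (hgrowth : ∀ i, ∀ x x' : ℝ, 0 ≤ x → 0 ≤ x' → α * |x - x'| ≤ |ℓ i x - ℓ i x'|)
    (F₀ : EuclideanSpace ℝ ι → ℝ)
    (hF₀ : ∀ y, F₀ y = ∑ i, ∫ u in (0 : ℝ)..(y i), ℓ i u) :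
    StrongConvexOn {y : EuclideanSpace ℝ ι | ∀ i, 0 ≤ y i} α F₀ :=
  stmt_16_general α ℓ hmono hgrowth F₀ hF₀
end

section
/- (Potential minimizers are MDP Wardrop equilibria.) Let F : (Fin (T+1) → Fin S → Fin A → ℝ) → ℝ be differentiable, with the partial derivative of F with respect to the coordinate (t,s,a) at every point y equal to ℓ t s a (y). If y⋆ ∈ Y(P,p) minimizes F over Y(P,p), then y⋆ is an MDP Wardrop equilibrium: for all t, s, a with y⋆ t s a > 0 and all a', Q t s a (y⋆) ≤ Q t s a' (y⋆). -/
/-!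
Backward induction on `t`. Suppose `y⋆` is an equilibrium at all times after `t` and
`m = y⋆ t s₀ a₀ > 0`. Move the mass `m` from `(t, s₀, a₀)` to `(t, s₀, a')`, and let both the
removed and the added mass evolve after time `t` by the action frequencies of `y⋆` in each state
(greedily where `y⋆` has no mass). The removed mass never exceeds `y⋆`, so the perturbed point is
feasible. By the equilibrium property after `t`, both masses only ever use `Q`-minimizing actions,
so their linearized costs are `m Q t s₀ a₀` and `m Q t s₀ a'`. First-order optimality of `y⋆`
on the convex set `Y(P, p)` makes the difference nonnegative.
-/

/-- The feasible set of population distributions for transition kernel `P`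
and initial distribution `p`. -/
def feasibleY {T S A : ℕ}
    (P : Fin T → Fin S → Fin S → Fin A → ℝ) (p : Fin S → ℝ) :
    Set (Fin (T + 1) → Fin S → Fin A → ℝ) :=
  {y | (∀ t s a, 0 ≤ y t s a) ∧
       (∀ s, ∑ a, y 0 s a = p s) ∧
       (∀ (t : Fin T) (s : Fin S),
          ∑ a, y t.succ s a = ∑ s', ∑ a, P t s s' a * y t.castSucc s' a)}

/-- Auxiliary Q-value function, indexed by "time remaining" `j` (so `j = 0`
corresponds to the final time `T`, and `j` corresponds to time `T - j`). -/
noncomputable def Qaux {T S A : ℕ}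
    (P : Fin T → Fin S → Fin S → Fin A → ℝ)
    (ℓ : Fin (T + 1) → Fin S → Fin A → ((Fin (T + 1) → Fin S → Fin A → ℝ) → ℝ)) :
    (j : ℕ) → j ≤ T → Fin S → Fin A → (Fin (T + 1) → Fin S → Fin A → ℝ) → ℝ
  | 0, _, s, a, y => ℓ (Fin.last T) s a y
  | (j + 1), h, s, a, y =>
      ℓ ⟨T - (j + 1), by omega⟩ s a y +
        ∑ s' : Fin S, P ⟨T - (j + 1), by omega⟩ s' s a *
          ⨅ a' : Fin A, Qaux P ℓ j (by omega) s' a' y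

/-- The Q-value function of the MDP congestion game, defined by backward
recursion: `Q T s a y = ℓ T s a y` and for `t < T`,
`Q t s a y = ℓ t s a y + ∑ s', P t s' s a * min_{a'} Q (t+1) s' a' y`. -/
noncomputable def Qval {T S A : ℕ}
    (P : Fin T → Fin S → Fin S → Fin A → ℝ)
    (ℓ : Fin (T + 1) → Fin S → Fin A → ((Fin (T + 1) → Fin S → Fin A → ℝ) → ℝ)) :
    Fin (T + 1) → Fin S → Fin A → (Fin (T + 1) → Fin S → Fin A → ℝ) → ℝ :=
  fun t => Qaux P ℓ (T - t.val) (Nat.sub_le T t.val)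

open Finset

section QValue

variable {T S A : ℕ} (P : Fin T → Fin S → Fin S → Fin A → ℝ)
  (ℓ : Fin (T + 1) → Fin S → Fin A → ((Fin (T + 1) → Fin S → Fin A → ℝ) → ℝ))

lemma Qaux_congr {j j' : ℕ} (h : j = j') (hj : j ≤ T) :
    Qaux P ℓ j hj = Qaux P ℓ j' (h ▸ hj) := by
  subst h; rfl

lemma Qval_last (s : Fin S) (a : Fin A) (y : Fin (T + 1) → Fin S → Fin A → ℝ) :
    Qval P ℓ (Fin.last T) s a y = ℓ (Fin.last T) s a y := by
  rw [Qval, Qaux_congr P ℓ (by simp : T - (Fin.last T).val = 0)]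
  rfl

lemma Qval_castSucc (τ : Fin T) (s : Fin S) (a : Fin A)
    (y : Fin (T + 1) → Fin S → Fin A → ℝ) :
    Qval P ℓ τ.castSucc s a y =
      ℓ τ.castSucc s a y + ∑ s', P τ s' s a * ⨅ a', Qval P ℓ τ.succ s' a' y := by
  have hτ : T - (τ.castSucc : ℕ) = T - (τ.val + 1) + 1 := by simp; omega
  have hidx : T - (T - (τ.val + 1) + 1) = τ.val := by omega
  rw [Qval, Qaux_congr P ℓ hτ, Qaux]
  simp only [hidx]
  rfl

end QValue

lemma sum_mul_eq_of_sum_eq_one {ι : Type*} [Fintype ι] {w q : ι → ℝ} {c : ℝ}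
    (hw : ∑ i, w i = 1) (hq : ∀ i, w i ≠ 0 → q i = c) : ∑ i, w i * q i = c := by
  calc ∑ i, w i * q i = ∑ i, w i * c :=
        sum_congr rfl fun i _ => by by_cases h : w i = 0 <;> simp [h, hq]
    _ = c := by rw [← sum_mul, hw, one_mul]

lemma ciInf_eq_of_forall_le {ι : Type*} [Finite ι] {q : ι → ℝ} {i : ι}
    (h : ∀ j, q i ≤ q j) : ⨅ j, q j = q i :=
  have : Nonempty ι := ⟨i⟩
  le_antisymm (ciInf_le (Finite.bddBelow_range q) i) (le_ciInf h)

section Pushforward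

variable {T S A : ℕ} (P : Fin T → Fin S → Fin S → Fin A → ℝ)

def inflow (τ : Fin T) (f : Fin S → Fin A → ℝ) (s : Fin S) : ℝ :=
  ∑ s', ∑ a, P τ s s' a * f s' a

/-- The state-action masses obtained by placing `μ` at time `t` and letting it evolve under `P`,
arriving mass being split among actions at time `τ + 1` in state `s` with weights `π τ s`. -/
noncomputable def pushforward (π : Fin T → Fin S → Fin A → ℝ) (t : Fin (T + 1))
    (μ : Fin S → Fin A → ℝ) : Fin (T + 1) → Fin S → Fin A → ℝ :=
  Fin.induction (if t = 0 then μ else 0) fun τ f =>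
    if τ.succ = t then μ
    else if t ≤ τ.castSucc then fun s a => inflow P τ f s * π τ s a
    else 0

variable {P} {π : Fin T → Fin S → Fin A → ℝ} {t : Fin (T + 1)} {μ : Fin S → Fin A → ℝ}

lemma inflow_mono (hP : ∀ τ s' s a, 0 ≤ P τ s' s a) (τ : Fin T) {f g : Fin S → Fin A → ℝ}
    (hfg : ∀ s a, f s a ≤ g s a) (s : Fin S) : inflow P τ f s ≤ inflow P τ g s :=
  sum_le_sum fun s' _ => sum_le_sum fun a _ => mul_le_mul_of_nonneg_left (hfg s' a) (hP _ _ _ _)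

lemma inflow_nonneg (hP : ∀ τ s' s a, 0 ≤ P τ s' s a) (τ : Fin T) {f : Fin S → Fin A → ℝ}
    (hf : ∀ s a, 0 ≤ f s a) (s : Fin S) : 0 ≤ inflow P τ f s := by
  simpa [inflow] using inflow_mono hP τ hf s

lemma inflow_zero (τ : Fin T) (s : Fin S) : inflow P τ 0 s = 0 := by
  simp [inflow]

lemma pushforward_zero : pushforward P π t μ 0 = if t = 0 then μ else 0 :=
  Fin.induction_zero ..

lemma pushforward_succ (τ : Fin T) :
    pushforward P π t μ τ.succ =
      if τ.succ = t then μ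
      else if t ≤ τ.castSucc then fun s a => inflow P τ (pushforward P π t μ τ.castSucc) s * π τ s a
      else 0 :=
  Fin.induction_succ ..

lemma pushforward_of_lt {τ : Fin (T + 1)} (hτ : τ < t) : pushforward P π t μ τ = 0 := by
  induction τ using Fin.induction with
  | zero => rw [pushforward_zero, if_neg hτ.ne']
  | succ τ _ =>
    rw [pushforward_succ, if_neg hτ.ne, if_neg]
    exact fun h => absurd (h.trans_lt (Fin.castSucc_lt_succ (i := τ))) hτ.not_gt

lemma pushforward_self : pushforward P π t μ t = μ := by
  cases t using Fin.cases with
  | zero => rw [pushforward_zero, if_pos rfl]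
  | succ τ => rw [pushforward_succ, if_pos rfl]

lemma sum_pushforward_succ (hπ : ∀ τ s, ∑ a, π τ s a = 1) (τ : Fin T) (s : Fin S) :
    ∑ a, pushforward P π t μ τ.succ s a =
      (if τ.succ = t then ∑ a, μ s a else 0) + inflow P τ (pushforward P π t μ τ.castSucc) s := by
  rw [pushforward_succ]
  split_ifs with h₁ h₂
  · rw [pushforward_of_lt (h₁ ▸ (Fin.castSucc_lt_succ (i := τ))), inflow_zero, add_zero]
  · rw [zero_add, ← mul_sum, hπ, mul_one]
  · rw [pushforward_of_lt (not_le.1 h₂)]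
    simp [inflow_zero]

lemma pushforward_nonneg (hP : ∀ τ s' s a, 0 ≤ P τ s' s a) (hπ : ∀ τ s a, 0 ≤ π τ s a)
    (hμ : ∀ s a, 0 ≤ μ s a) (τ : Fin (T + 1)) (s : Fin S) (a : Fin A) :
    0 ≤ pushforward P π t μ τ s a := by
  induction τ using Fin.induction generalizing s a with
  | zero => rw [pushforward_zero]; split_ifs <;> simp [hμ]
  | succ τ ih =>
    rw [pushforward_succ]
    split_ifs
    · exact hμ s a
    · exact mul_nonneg (inflow_nonneg hP τ ih s) (hπ τ s a)
    · exact le_rfl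

lemma pushforward_le {y : Fin (T + 1) → Fin S → Fin A → ℝ} {p : Fin S → ℝ}
    (hy : y ∈ feasibleY P p) (hP : ∀ τ s' s a, 0 ≤ P τ s' s a) (hπ : ∀ τ s a, 0 ≤ π τ s a)
    (hπy : ∀ τ s a, (∑ a', y τ.succ s a') * π τ s a = y τ.succ s a)
    (hμ : ∀ s a, μ s a ≤ y t s a) (τ : Fin (T + 1)) (s : Fin S) (a : Fin A) :
    pushforward P π t μ τ s a ≤ y τ s a := by
  obtain ⟨hy₀, -, hyP⟩ := hy
  induction τ using Fin.induction generalizing s a with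
  | zero =>
    rw [pushforward_zero]
    split_ifs with h
    · exact h ▸ hμ s a
    · exact hy₀ 0 s a
  | succ τ ih =>
    rw [pushforward_succ]
    split_ifs with h₁ h₂
    · exact h₁ ▸ hμ s a
    · calc inflow P τ (pushforward P π t μ τ.castSucc) s * π τ s a
          ≤ (∑ a', y τ.succ s a') * π τ s a :=
            mul_le_mul_of_nonneg_right ((inflow_mono hP τ ih s).trans (hyP τ s).ge) (hπ τ s a)
        _ = y τ.succ s a := hπy τ s a
    · exact hy₀ _ s a

lemma pushforward_castSucc (u : Fin T) :
    pushforward P π u.castSucc μ =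
      Pi.single u.castSucc μ + pushforward P π u.succ fun s a => inflow P u μ s * π u s a := by
  funext τ
  induction τ using Fin.induction with
  | zero =>
    rw [Pi.add_apply, pushforward_zero, pushforward_zero, if_neg (Fin.succ_ne_zero u)]
    by_cases h : u.castSucc = 0
    · rw [if_pos h, h, Pi.single_eq_same, add_zero]
    · rw [if_neg h, Pi.single_eq_of_ne' h, add_zero]
  | succ τ ih =>
    rw [Pi.add_apply, pushforward_succ, pushforward_succ]
    rcases lt_trichotomy τ u with h | rfl | h
    · have h₁ : ¬ u.castSucc ≤ τ.castSucc := Fin.castSucc_le_castSucc_iff.not.2 h.not_ge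
      have h₂ : ¬ u.succ ≤ τ.castSucc := Fin.succ_le_castSucc_iff.not.2 h.not_gt
      simp only [Fin.succ_inj, h.ne, h₁, h₂, if_false]
      split_ifs with h₃
      · rw [← h₃, Pi.single_eq_same, add_zero]
      · rw [Pi.single_eq_of_ne' (Ne.symm h₃), add_zero]
    · rw [if_neg Fin.castSucc_lt_succ.ne', if_pos le_rfl, if_pos rfl,
        Pi.single_eq_of_ne' Fin.castSucc_lt_succ.ne, zero_add, pushforward_self]
    · have hne : τ.succ ≠ u.castSucc := (Fin.castSucc_lt_succ_iff.2 h.le).ne'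
      rw [if_neg hne, if_pos (Fin.castSucc_le_castSucc_iff.2 h.le),
        if_neg (Fin.succ_inj.not.2 h.ne'), if_pos (Fin.succ_le_castSucc_iff.2 h),
        Pi.single_eq_of_ne hne, zero_add, ih, Pi.add_apply,
        Pi.single_eq_of_ne (Fin.castSucc_inj.not.2 h.ne'), zero_add]

lemma pushforward_last :
    pushforward P π (Fin.last T) μ = Pi.single (Fin.last T) μ := by
  funext τ
  rcases (Fin.le_last τ).lt_or_eq with h | rfl
  · rw [pushforward_of_lt h, Pi.single_eq_of_ne h.ne]
  · rw [pushforward_self, Pi.single_eq_same]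

end Pushforward

section LinearCost

variable {T S A : ℕ}
  (ℓ : Fin (T + 1) → Fin S → Fin A → ((Fin (T + 1) → Fin S → Fin A → ℝ) → ℝ))
  (y : Fin (T + 1) → Fin S → Fin A → ℝ)

def linearCost (f : Fin (T + 1) → Fin S → Fin A → ℝ) : ℝ :=
  ∑ t, ∑ s, ∑ a, f t s a * ℓ t s a y

lemma linearCost_add (f g : Fin (T + 1) → Fin S → Fin A → ℝ) :
    linearCost ℓ y (f + g) = linearCost ℓ y f + linearCost ℓ y g := by
  simp only [linearCost, Pi.add_apply, add_mul, sum_add_distrib]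

lemma linearCost_sub (f g : Fin (T + 1) → Fin S → Fin A → ℝ) :
    linearCost ℓ y (f - g) = linearCost ℓ y f - linearCost ℓ y g := by
  simp only [linearCost, Pi.sub_apply, sub_mul, sum_sub_distrib]

lemma linearCost_single (t : Fin (T + 1)) (μ : Fin S → Fin A → ℝ) :
    linearCost ℓ y (Pi.single t μ) = ∑ s, ∑ a, μ s a * ℓ t s a y := by
  rw [linearCost, sum_eq_single t]
  · rw [Pi.single_eq_same]
  · intro τ _ hτ
    simp [Pi.single_eq_of_ne hτ]
  · simp

variable {P : Fin T → Fin S → Fin S → Fin A → ℝ} {π : Fin T → Fin S → Fin A → ℝ}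

/-- Bellman's recursion for `Qval`, averaged against the evolving mass, telescopes over time. -/
theorem linearCost_pushforward (hπ : ∀ τ s, ∑ a, π τ s a = 1) (t : Fin (T + 1))
    (hopt : ∀ τ : Fin T, t ≤ τ.castSucc → ∀ s a, π τ s a ≠ 0 →
      ∀ a', Qval P ℓ τ.succ s a y ≤ Qval P ℓ τ.succ s a' y)
    (μ : Fin S → Fin A → ℝ) :
    linearCost ℓ y (pushforward P π t μ) = ∑ s, ∑ a, μ s a * Qval P ℓ t s a y := by
  induction t using Fin.reverseInduction generalizing μ with
  | last => simp only [pushforward_last, linearCost_single, Qval_last]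
  | cast u ih =>
    have hV : ∀ s, ∑ a, π u s a * Qval P ℓ u.succ s a y = ⨅ a', Qval P ℓ u.succ s a' y :=
      fun s => sum_mul_eq_of_sum_eq_one (hπ u s) fun a ha =>
        (ciInf_eq_of_forall_le (q := (Qval P ℓ u.succ s · y)) (hopt u le_rfl s a ha)).symm
    rw [pushforward_castSucc, linearCost_add, linearCost_single,
      ih (fun τ hτ => hopt τ (Fin.castSucc_lt_succ.le.trans hτ))]
    calc _ = ∑ s, ∑ a, μ s a * ℓ u.castSucc s a y +
          ∑ s, inflow P u μ s * ⨅ a', Qval P ℓ u.succ s a' y := by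
          simp only [mul_assoc, ← mul_sum, hV]
      _ = _ := by
          simp only [Qval_castSucc, mul_add, sum_add_distrib, inflow, sum_mul, mul_sum]
          congr 1
          rw [sum_comm]
          refine sum_congr rfl fun s' _ => ?_
          rw [sum_comm]
          exact sum_congr rfl fun a _ => sum_congr rfl fun s _ => by ring

end LinearCost

section ConditionalPolicy

variable {T S A : ℕ} (y : Fin (T + 1) → Fin S → Fin A → ℝ) (g : Fin T → Fin S → Fin A)

noncomputable def conditionalPolicy (τ : Fin T) (s : Fin S) (a : Fin A) : ℝ :=
  if ∑ a', y τ.succ s a' = 0 then (if a = g τ s then 1 else 0)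
  else y τ.succ s a / ∑ a', y τ.succ s a'

lemma sum_conditionalPolicy (τ : Fin T) (s : Fin S) : ∑ a, conditionalPolicy y g τ s a = 1 := by
  unfold conditionalPolicy
  split_ifs with h
  · simp
  · rw [← sum_div, div_self h]

variable {y g} in
lemma conditionalPolicy_ne_zero {τ : Fin T} {s : Fin S} {a : Fin A}
    (h : conditionalPolicy y g τ s a ≠ 0) : y τ.succ s a ≠ 0 ∨ a = g τ s := by
  unfold conditionalPolicy at h
  split_ifs at h with h₁ h₂
  · exact Or.inr h₂
  · exact absurd rfl h
  · exact Or.inl (left_ne_zero_of_mul h)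

variable {y} (hy : ∀ t s a, 0 ≤ y t s a)
include hy

lemma conditionalPolicy_nonneg (τ : Fin T) (s : Fin S) (a : Fin A) :
    0 ≤ conditionalPolicy y g τ s a := by
  unfold conditionalPolicy
  split_ifs
  exacts [zero_le_one, le_rfl, div_nonneg (hy _ _ _) (sum_nonneg fun _ _ => hy _ _ _)]

lemma sum_mul_conditionalPolicy (τ : Fin T) (s : Fin S) (a : Fin A) :
    (∑ a', y τ.succ s a') * conditionalPolicy y g τ s a = y τ.succ s a := by
  unfold conditionalPolicy
  by_cases h : ∑ a', y τ.succ s a' = 0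
  · rw [h, zero_mul, (sum_eq_zero_iff_of_nonneg fun _ _ => hy _ _ _).1 h a (mem_univ a)]
  · rw [if_neg h, mul_div_cancel₀ _ h]

end ConditionalPolicy

section Feasibility

variable {T S A : ℕ} {P : Fin T → Fin S → Fin S → Fin A → ℝ} {p : Fin S → ℝ}

lemma convex_feasibleY : Convex ℝ (feasibleY P p) := by
  rintro y ⟨hy₀, hy₁, hyP⟩ z ⟨hz₀, hz₁, hzP⟩ α β hα hβ hαβ
  refine ⟨fun t s a => ?_, fun s => ?_, fun τ s => ?_⟩
  · simp only [Pi.add_apply, Pi.smul_apply, smul_eq_mul]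
    exact add_nonneg (mul_nonneg hα (hy₀ t s a)) (mul_nonneg hβ (hz₀ t s a))
  · simp only [Pi.add_apply, Pi.smul_apply, smul_eq_mul, sum_add_distrib, ← mul_sum, hy₁, hz₁]
    rw [← add_mul, hαβ, one_mul]
  · simp only [Pi.add_apply, Pi.smul_apply, smul_eq_mul, sum_add_distrib, ← mul_sum]
    rw [hyP, hzP]
    simp only [mul_add, sum_add_distrib, mul_sum, mul_left_comm _ α, mul_left_comm _ β]

lemma add_pushforward_sub_mem_feasibleY {y : Fin (T + 1) → Fin S → Fin A → ℝ}
    (hy : y ∈ feasibleY P p) (hP : ∀ τ s' s a, 0 ≤ P τ s' s a)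
    {π : Fin T → Fin S → Fin A → ℝ} (hπ₀ : ∀ τ s a, 0 ≤ π τ s a) (hπ₁ : ∀ τ s, ∑ a, π τ s a = 1)
    (hπy : ∀ τ s a, (∑ a', y τ.succ s a') * π τ s a = y τ.succ s a)
    {t : Fin (T + 1)} {μ ν : Fin S → Fin A → ℝ} (hμ : ∀ s a, 0 ≤ μ s a)
    (hν : ∀ s a, ν s a ≤ y t s a) (hμν : ∀ s, ∑ a, μ s a = ∑ a, ν s a) :
    y + (pushforward P π t μ - pushforward P π t ν) ∈ feasibleY P p := by
  have hν_le := pushforward_le hy hP hπ₀ hπy hν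
  obtain ⟨hy₀, hy₁, hyP⟩ := hy
  refine ⟨fun τ s a => ?_, fun s => ?_, fun τ s => ?_⟩
  · have := pushforward_nonneg hP hπ₀ hμ τ s a (t := t)
    simp only [Pi.add_apply, Pi.sub_apply]
    linarith [hν_le τ s a]
  · simp only [Pi.add_apply, Pi.sub_apply, sum_add_distrib, sum_sub_distrib, hy₁,
      pushforward_zero]
    split_ifs <;> simp [hμν]
  · have hyτ := hyP τ s
    simp only [Pi.add_apply, Pi.sub_apply, sum_add_distrib, sum_sub_distrib,
      sum_pushforward_succ hπ₁, hμν, hyτ]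
    simp only [inflow, mul_add, mul_sub, sum_add_distrib, sum_sub_distrib]
    ring

end Feasibility

lemma IsMinOn.fderiv_sub_nonneg {E : Type*} [NormedAddCommGroup E] [NormedSpace ℝ E]
    {F : E → ℝ} {s : Set E} {x y : E} (hmin : IsMinOn F s x) (hs : Convex ℝ s) (hx : x ∈ s)
    (hy : y ∈ s) (hF : DifferentiableAt ℝ F x) : 0 ≤ fderiv ℝ F x (y - x) :=
  hmin.localize.hasFDerivWithinAt_nonneg hF.hasFDerivAt.hasFDerivWithinAt
    (sub_mem_posTangentConeAt_of_segment_subset (hs.segment_subset hx hy))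

lemma fderiv_apply_eq_linearCost {T S A : ℕ}
    {ℓ : Fin (T + 1) → Fin S → Fin A → ((Fin (T + 1) → Fin S → Fin A → ℝ) → ℝ)}
    {F : (Fin (T + 1) → Fin S → Fin A → ℝ) → ℝ}
    (hF : ∀ y t s a, fderiv ℝ F y (Pi.single t (Pi.single s (Pi.single a (1 : ℝ)))) = ℓ t s a y)
    (y d : Fin (T + 1) → Fin S → Fin A → ℝ) :
    fderiv ℝ F y d = linearCost ℓ y d := by
  have hd : d = ∑ t, ∑ s, ∑ a, d t s a • Pi.single t (Pi.single s (Pi.single a (1 : ℝ))) := by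
    funext t s a
    simp [Finset.sum_apply, Pi.single_apply, ite_apply, apply_ite]
  conv_lhs => rw [hd]
  simp only [map_sum, map_smul, hF, smul_eq_mul, linearCost]

def IsWardropAt {T S A : ℕ} (P : Fin T → Fin S → Fin S → Fin A → ℝ)
    (ℓ : Fin (T + 1) → Fin S → Fin A → ((Fin (T + 1) → Fin S → Fin A → ℝ) → ℝ))
    (y : Fin (T + 1) → Fin S → Fin A → ℝ) (t : Fin (T + 1)) : Prop :=
  ∀ s a, 0 < y t s a → ∀ a', Qval P ℓ t s a y ≤ Qval P ℓ t s a' y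

lemma Qval_le_of_conditionalPolicy_ne_zero {T S A : ℕ} {P : Fin T → Fin S → Fin S → Fin A → ℝ}
    {ℓ : Fin (T + 1) → Fin S → Fin A → ((Fin (T + 1) → Fin S → Fin A → ℝ) → ℝ)}
    {y : Fin (T + 1) → Fin S → Fin A → ℝ} (hy : ∀ t s a, 0 ≤ y t s a)
    {g : Fin T → Fin S → Fin A} (hg : ∀ τ s a, Qval P ℓ τ.succ s (g τ s) y ≤ Qval P ℓ τ.succ s a y)
    {t : Fin (T + 1)} (hlater : ∀ u, t < u → IsWardropAt P ℓ y u)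
    (τ : Fin T) (hτ : t ≤ τ.castSucc) (s : Fin S) (a : Fin A)
    (ha : conditionalPolicy y g τ s a ≠ 0) (a' : Fin A) :
    Qval P ℓ τ.succ s a y ≤ Qval P ℓ τ.succ s a' y := by
  rcases conditionalPolicy_ne_zero ha with h | rfl
  · exact hlater τ.succ (hτ.trans_lt Fin.castSucc_lt_succ) s a ((hy _ s a).lt_of_ne' h) a'
  · exact hg τ s a'

theorem isWardropAt_of_isMinOn {T S A : ℕ} {P : Fin T → Fin S → Fin S → Fin A → ℝ}
    {p : Fin S → ℝ}
    {ℓ : Fin (T + 1) → Fin S → Fin A → ((Fin (T + 1) → Fin S → Fin A → ℝ) → ℝ)}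
    {F : (Fin (T + 1) → Fin S → Fin A → ℝ) → ℝ} {y : Fin (T + 1) → Fin S → Fin A → ℝ}
    (hP : ∀ τ s' s a, 0 ≤ P τ s' s a) (hF : DifferentiableAt ℝ F y)
    (hFgrad : ∀ y t s a,
      fderiv ℝ F y (Pi.single t (Pi.single s (Pi.single a (1 : ℝ)))) = ℓ t s a y)
    (hy : y ∈ feasibleY P p) (hmin : IsMinOn F (feasibleY P p) y) (t : Fin (T + 1))
    (hlater : ∀ u, t < u → IsWardropAt P ℓ y u) : IsWardropAt P ℓ y t := by
  intro s₀ a₀ hpos a'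
  have : Nonempty (Fin A) := ⟨a₀⟩
  choose g hg using fun (τ : Fin T) s => Finite.exists_min (Qval P ℓ τ.succ s · y)
  have hopt := Qval_le_of_conditionalPolicy_ne_zero hy.1 hg hlater
  set m := y t s₀ a₀
  set δ : Fin A → Fin S → Fin A → ℝ := fun a s b => if s = s₀ ∧ b = a then m else 0 with hδ
  have hδ_cost : ∀ a (q : Fin S → Fin A → ℝ), ∑ s, ∑ b, δ a s b * q s b = m * q s₀ a := by
    intro a q
    simp [hδ, ite_and]
  have hδ_sum : ∀ a s, ∑ b, δ a s b = if s = s₀ then m else 0 := by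
    intro a s
    simp [hδ, ite_and]
  have hfeas := add_pushforward_sub_mem_feasibleY hy hP (conditionalPolicy_nonneg g hy.1)
    (sum_conditionalPolicy y g) (sum_mul_conditionalPolicy g hy.1) (t := t)
    (μ := δ a') (ν := δ a₀) ?_ ?_ (fun s => by rw [hδ_sum, hδ_sum])
  · have hder := hmin.fderiv_sub_nonneg convex_feasibleY hy hfeas hF
    rw [add_sub_cancel_left, fderiv_apply_eq_linearCost hFgrad, linearCost_sub,
      linearCost_pushforward _ _ (sum_conditionalPolicy y g) t hopt,
      linearCost_pushforward _ _ (sum_conditionalPolicy y g) t hopt, hδ_cost, hδ_cost] at hder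
    exact le_of_mul_le_mul_left (sub_nonneg.1 hder) hpos
  · intro s b
    simp only [hδ]
    split_ifs
    exacts [hpos.le, le_rfl]
  · intro s b
    simp only [hδ]
    split_ifs with h
    · rw [h.1, h.2]
    · exact hy.1 t s b

theorem stmt_17_general
    (T S A : ℕ)
    (P : Fin T → Fin S → Fin S → Fin A → ℝ)
    (hPnonneg : ∀ t s' s a, 0 ≤ P t s' s a)
    (p : Fin S → ℝ)
    (ℓ : Fin (T + 1) → Fin S → Fin A → ((Fin (T + 1) → Fin S → Fin A → ℝ) → ℝ))
    (F : (Fin (T + 1) → Fin S → Fin A → ℝ) → ℝ)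
    (hFdiff : Differentiable ℝ F)
    (hFgrad : ∀ y t s a,
      fderiv ℝ F y (Pi.single t (Pi.single s (Pi.single a (1 : ℝ)))) = ℓ t s a y)
    (ystar : Fin (T + 1) → Fin S → Fin A → ℝ)
    (hystar : ystar ∈ feasibleY P p)
    (hmin : ∀ y ∈ feasibleY P p, F ystar ≤ F y) :
    ∀ t s a, 0 < ystar t s a →
      ∀ a', Qval P ℓ t s a ystar ≤ Qval P ℓ t s a' ystar := by
  intro t
  induction t using WellFoundedGT.induction with
  | _ t ih =>
    exact isWardropAt_of_isMinOn hPnonneg (hFdiff ystar) hFgrad hystar hmin t ih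

theorem stmt_17
    (T S A : ℕ) (hS : 1 ≤ S) (hA : 1 ≤ A)
    (P : Fin T → Fin S → Fin S → Fin A → ℝ)
    (hPnonneg : ∀ t s' s a, 0 ≤ P t s' s a)
    (hPsum : ∀ t s a, ∑ s', P t s' s a = 1)
    (p : Fin S → ℝ) (hp : ∀ s, 0 ≤ p s)
    (ℓ : Fin (T + 1) → Fin S → Fin A → ((Fin (T + 1) → Fin S → Fin A → ℝ) → ℝ))
    (hℓcont : ∀ t s a, Continuous (ℓ t s a))
    (F : (Fin (T + 1) → Fin S → Fin A → ℝ) → ℝ)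
    (hFdiff : Differentiable ℝ F)
    (hFgrad : ∀ y t s a,
      fderiv ℝ F y (Pi.single t (Pi.single s (Pi.single a (1 : ℝ)))) = ℓ t s a y)
    (ystar : Fin (T + 1) → Fin S → Fin A → ℝ)
    (hystar : ystar ∈ feasibleY P p)
    (hmin : ∀ y ∈ feasibleY P p, F ystar ≤ F y) :
    ∀ t s a, 0 < ystar t s a →
      ∀ a', Qval P ℓ t s a ystar ≤ Qval P ℓ t s a' ystar :=
  stmt_17_general T S A P hPnonneg p ℓ F hFdiff hFgrad ystar hystar hmin
end
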